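/- Tight typings of CbV normal forms: if normal_cbv(t) and Γ ⊢^{(m,e)} t : [] is derivable in the CbV multi type system, then Γ is the empty type context and m = e = 0. -/

import Mathlib

/-- Terms of the linear substitution calculus:
    variables, abstractions, applications, explicit substitutions `t[x←s]`. -/
inductive Trm : Type
  | var : ℕ → Trm
  | lam : ℕ → Trm → Trm
  | app : Trm → Trm → Trm
  | esub : Trm → ℕ → Trm → Trm
deriving DecidableEq

namespace Trm

/-- Free variables. -/
def fv : Trm → Finset ℕ
  | var x => {x}
  | lam x t => t.fv.erase x
  | app t s => t.fv ∪ s.fv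
  | esub t x s => t.fv.erase x ∪ s.fv

def Closed (t : Trm) : Prop := t.fv = ∅

/-- Values are abstractions. -/
def IsVal : Trm → Prop
  | lam _ _ => True
  | _ => False

end Trm

/-- One-hole (weak) contexts. -/
inductive Ctx : Type
  | hole
  | appL : Ctx → Trm → Ctx
  | appR : Trm → Ctx → Ctx
  | subL : Ctx → ℕ → Trm → Ctx
  | subR : Trm → ℕ → Ctx → Ctx

namespace Ctx

/-- Plugging a term in a context (possibly capturing). -/
def plug : Ctx → Trm → Trm
  | hole, t => t
  | appL C s, t => .app (C.plug t) s
  | appR s C, t => .app s (C.plug t)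
  | subL C x s, t => .esub (C.plug t) x s
  | subR s x C, t => .esub s x (C.plug t)

/-- The variables bound along the path to the hole. -/
def binders : Ctx → Finset ℕ
  | hole => ∅
  | appL C _ => C.binders
  | appR _ C => C.binders
  | subL C x _ => insert x C.binders
  | subR _ _ C => C.binders

/-- Substitution contexts `S ::= ⟨·⟩ | S[x←t]`. -/
def IsSub : Ctx → Prop
  | hole => True
  | subL C _ _ => C.IsSub
  | _ => False

/-- Call-by-name contexts `C ::= ⟨·⟩ | C t | C[x←t]`. -/
def IsCbN : Ctx → Prop
  | hole => True
  | appL C _ => C.IsCbN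
  | subL C _ _ => C.IsCbN
  | _ => False

end Ctx

/-- Call-by-need contexts `E ::= ⟨·⟩ | E t | E[x←t] | E⟨⟨x⟩⟩[x←E']`. -/
inductive Ctx.IsNeed : Ctx → Prop
  | hole : Ctx.IsNeed .hole
  | appL {C : Ctx} (t : Trm) : C.IsNeed → Ctx.IsNeed (.appL C t)
  | subL {C : Ctx} (x : ℕ) (t : Trm) : C.IsNeed → Ctx.IsNeed (.subL C x t)
  | subR {C E : Ctx} {x : ℕ} : C.IsNeed → E.IsNeed → x ∉ E.binders →
      Ctx.IsNeed (.subR (E.plug (.var x)) x C)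

namespace Ctx

end Ctx

/-- Multiplicative root-step  S⟨λx.t⟩ s ↦ S⟨t[x←s]⟩. -/
inductive RootM : Trm → Trm → Prop
  | mk (S : Ctx) (x : ℕ) (t s : Trm) :
      S.IsSub → Disjoint S.binders s.fv →
      RootM (.app (S.plug (.lam x t)) s) (S.plug (.esub t x s))

/-- Exponential CbN root-step  C⟨⟨x⟩⟩[x←t] ↦ C⟨⟨t⟩⟩[x←t]. -/
inductive RootECbN : Trm → Trm → Prop
  | mk (C : Ctx) (x : ℕ) (t : Trm) :
      C.IsCbN → x ∉ C.binders → Disjoint C.binders t.fv →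
      RootECbN (.esub (C.plug (.var x)) x t) (.esub (C.plug t) x t)

/-- Exponential CbV root-step  V⟨⟨x⟩⟩[x←S⟨v⟩] ↦ S⟨V⟨⟨v⟩⟩[x←v]⟩ with v a value. -/
inductive RootECbV : Trm → Trm → Prop
  | mk (V S : Ctx) (x y : ℕ) (b : Trm) :
      S.IsSub → x ∉ V.binders →
      Disjoint V.binders (Trm.lam y b).fv →
      Disjoint S.binders (V.plug (.var x)).fv →
      RootECbV (.esub (V.plug (.var x)) x (S.plug (.lam y b)))
               (S.plug (.esub (V.plug (.lam y b)) x (.lam y b)))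

/-- Exponential CbNeed root-step  E⟨⟨x⟩⟩[x←S⟨v⟩] ↦ S⟨E⟨⟨v⟩⟩[x←v]⟩ with v a value. -/
inductive RootENeed : Trm → Trm → Prop
  | mk (E S : Ctx) (x y : ℕ) (b : Trm) :
      E.IsNeed → S.IsSub → x ∉ E.binders →
      Disjoint E.binders (Trm.lam y b).fv →
      Disjoint S.binders (E.plug (.var x)).fv →
      RootENeed (.esub (E.plug (.var x)) x (S.plug (.lam y b)))
                (S.plug (.esub (E.plug (.lam y b)) x (.lam y b)))

/-- Closure of a root relation under a class of contexts. -/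
def Close (P : Ctx → Prop) (R : Trm → Trm → Prop) (t s : Trm) : Prop :=
  ∃ (C : Ctx) (t' s' : Trm), P C ∧ R t' s' ∧ t = C.plug t' ∧ s = C.plug s'

/-- Multiplicative and exponential CbN, CbV, CbNeed steps. -/
def StepMCbN : Trm → Trm → Prop := Close Ctx.IsCbN RootM
def StepECbN : Trm → Trm → Prop := Close Ctx.IsCbN RootECbN
def StepCbN (t s : Trm) : Prop := StepMCbN t s ∨ StepECbN t s
def StepMCbV : Trm → Trm → Prop := Close (fun _ => True) RootM
def StepECbV : Trm → Trm → Prop := Close (fun _ => True) RootECbV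
def StepCbV (t s : Trm) : Prop := StepMCbV t s ∨ StepECbV t s
def StepMNeed : Trm → Trm → Prop := Close Ctx.IsNeed RootM
def StepENeed : Trm → Trm → Prop := Close Ctx.IsNeed RootENeed
def StepNeed (t s : Trm) : Prop := StepMNeed t s ∨ StepENeed t s

/-- Evaluation sequences counting multiplicative and exponential steps. -/
inductive Evals (Rm Re : Trm → Trm → Prop) : Trm → Trm → ℕ → ℕ → Prop
  | refl (t : Trm) : Evals Rm Re t t 0 0
  | stepM {t u s : Trm} {m e : ℕ} :
      Rm t u → Evals Rm Re u s m e → Evals Rm Re t s (m + 1) e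
  | stepE {t u s : Trm} {m e : ℕ} :
      Re t u → Evals Rm Re u s m e → Evals Rm Re t s m (e + 1)

/-- The predicate `normal`: normal(λx.t); normal(t[x←s]) if normal(t). -/
inductive NormalP : Trm → Prop
  | lam (x : ℕ) (t : Trm) : NormalP (.lam x t)
  | esub {t : Trm} (x : ℕ) (s : Trm) : NormalP t → NormalP (.esub t x s)

/-- The predicate `normal_cbv`. -/
inductive NormalCbv : Trm → Prop
  | lam (x : ℕ) (t : Trm) : NormalCbv (.lam x t)
  | esub {t s : Trm} (x : ℕ) : NormalCbv t → NormalCbv s → NormalCbv (.esub t x s)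

/-! ### CbN multi types.  Multi types are represented as lists of linear types;
multi-set union is list concatenation and type contexts are functions to lists. -/

inductive TyN : Type
  | norm : TyN
  | arr : List TyN → TyN → TyN

/-- The empty CbN type context. -/
def εN : ℕ → List TyN := fun _ => []

/-! CbN typing judgements `Γ ⊢^{(m,e)} t : L` (linear) and `Γ ⊢^{(m,e)} t : M` (multi,
the `many` rule being presented in iterated form). -/
mutual
  inductive JN : (ℕ → List TyN) → Trm → TyN → ℕ → ℕ → Prop
    | ax (x : ℕ) (L : TyN) :
        JN (Function.update εN x [L]) (.var x) L 0 1
    | norm (x : ℕ) (t : Trm) : JN εN (.lam x t) .norm 0 0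
    | lam {Γ : ℕ → List TyN} {t : Trm} {L : TyN} {m e : ℕ} (x : ℕ) :
        JN Γ t L m e →
        JN (Function.update Γ x []) (.lam x t) (.arr (Γ x) L) m e
    | app {Γ Δ : ℕ → List TyN} {t s : Trm} {M : List TyN} {L : TyN} {m e m' e' : ℕ} :
        JN Γ t (.arr M L) m e → JNM Δ s M m' e' →
        JN (fun y => Γ y ++ Δ y) (.app t s) L (m + m' + 1) (e + e')
    | esub {Γ Δ : ℕ → List TyN} {t s : Trm} {L : TyN} {m e m' e' : ℕ} (x : ℕ) :
        JN Γ t L m e → JNM Δ s (Γ x) m' e' →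
        JN (fun y => (Function.update Γ x []) y ++ Δ y) (.esub t x s) L (m + m') (e + e')

  inductive JNM : (ℕ → List TyN) → Trm → List TyN → ℕ → ℕ → Prop
    | nil (t : Trm) : JNM εN t [] 0 0
    | cons {Γ Δ : ℕ → List TyN} {t : Trm} {L : TyN} {M : List TyN} {m e m' e' : ℕ} :
        JN Γ t L m e → JNM Δ t M m' e' →
        JNM (fun y => Γ y ++ Δ y) t (L :: M) (m + m') (e + e')
end

/-! ### CbV multi types. -/

inductive TyV : Type
  | arr : List TyV → List TyV → TyV

def εV : ℕ → List TyV := fun _ => []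

/-! CbV typing: `JVL` types abstractions with linear types (rule fun),
`JV` assigns multi types (rules ax, app, many, ES). -/
mutual
  inductive JVL : (ℕ → List TyV) → Trm → TyV → ℕ → ℕ → Prop
    | lam {Γ : ℕ → List TyV} {t : Trm} {M : List TyV} {m e : ℕ} (x : ℕ) :
        JV Γ t M m e →
        JVL (Function.update Γ x []) (.lam x t) (.arr (Γ x) M) m e

  inductive JV : (ℕ → List TyV) → Trm → List TyV → ℕ → ℕ → Prop
    | ax (x : ℕ) (M : List TyV) :
        JV (Function.update εV x M) (.var x) M 0 1
    | app {Γ Δ : ℕ → List TyV} {t s : Trm} {M N : List TyV} {m e m' e' : ℕ} :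
        JV Γ t [.arr M N] m e → JV Δ s M m' e' →
        JV (fun y => Γ y ++ Δ y) (.app t s) N (m + m' + 1) (e + e')
    | many_nil (x : ℕ) (t : Trm) : JV εV (.lam x t) [] 0 0
    | many_cons {Γ Δ : ℕ → List TyV} {x : ℕ} {t : Trm} {L : TyV} {M : List TyV}
        {m e m' e' : ℕ} :
        JVL Γ (.lam x t) L m e → JV Δ (.lam x t) M m' e' →
        JV (fun y => Γ y ++ Δ y) (.lam x t) (L :: M) (m + m') (e + e')
    | esub {Γ Δ : ℕ → List TyV} {t s : Trm} {M : List TyV} {m e m' e' : ℕ} (x : ℕ) :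
        JV Γ t M m e → JV Δ s (Γ x) m' e' →
        JV (fun y => (Function.update Γ x []) y ++ Δ y) (.esub t x s) M (m + m') (e + e')
end

/-! ### CbNeed multi types. -/

inductive TyNd : Type
  | norm : TyNd
  | arr : List TyNd → List TyNd → TyNd

def εNd : ℕ → List TyNd := fun _ => []

/-! CbNeed typing: `JNdL` types abstractions with linear types (rules normal, fun);
`JNd` assigns multi types (rules ax with M ≠ [], many with nonempty families,
app_gc, app, ES_gc, ES). -/
mutual
  inductive JNdL : (ℕ → List TyNd) → Trm → TyNd → ℕ → ℕ → Prop
    | norm (x : ℕ) (t : Trm) : JNdL εNd (.lam x t) .norm 0 0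
    | lam {Γ : ℕ → List TyNd} {t : Trm} {N : List TyNd} {m e : ℕ} (x : ℕ) :
        JNd Γ t N m e →
        JNdL (Function.update Γ x []) (.lam x t) (.arr (Γ x) N) m e

  inductive JNd : (ℕ → List TyNd) → Trm → List TyNd → ℕ → ℕ → Prop
    | ax (x : ℕ) (M : List TyNd) : M ≠ [] →
        JNd (Function.update εNd x M) (.var x) M 0 1
    | many_one {Γ : ℕ → List TyNd} {x : ℕ} {t : Trm} {L : TyNd} {m e : ℕ} :
        JNdL Γ (.lam x t) L m e → JNd Γ (.lam x t) [L] m e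
    | many_cons {Γ Δ : ℕ → List TyNd} {x : ℕ} {t : Trm} {L : TyNd} {M : List TyNd}
        {m e m' e' : ℕ} :
        JNdL Γ (.lam x t) L m e → JNd Δ (.lam x t) M m' e' → M ≠ [] →
        JNd (fun y => Γ y ++ Δ y) (.lam x t) (L :: M) (m + m') (e + e')
    | app_gc {Γ : ℕ → List TyNd} {t : Trm} {M : List TyNd} {m e : ℕ} (s : Trm) :
        JNd Γ t [.arr [] M] m e →
        JNd Γ (.app t s) M (m + 1) e
    | app {Γ Δ : ℕ → List TyNd} {t s : Trm} {M N : List TyNd} {m e m' e' : ℕ} :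
        JNd Γ t [.arr N M] m e → JNd Δ s N m' e' → N ≠ [] →
        JNd (fun y => Γ y ++ Δ y) (.app t s) M (m + m' + 1) (e + e')
    | esub_gc {Γ : ℕ → List TyNd} {t : Trm} {M : List TyNd} {m e : ℕ} (x : ℕ) (s : Trm) :
        JNd Γ t M m e → Γ x = [] →
        JNd Γ (.esub t x s) M m e
    | esub {Γ Δ : ℕ → List TyNd} {t s : Trm} {M : List TyNd} {m e m' e' : ℕ} (x : ℕ) :
        JNd Γ t M m e → JNd Δ s (Γ x) m' e' → Γ x ≠ [] →
        JNd (fun y => (Function.update Γ x []) y ++ Δ y) (.esub t x s) M (m + m') (e + e')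
end

theorem εV_update_nil (x : ℕ) : Function.update εV x [] = εV :=
  Function.update_eq_self x εV

/-- Tight typings of CbV normal forms. -/
theorem cbv_tight_normal {Γ : ℕ → List TyV} {t : Trm} {m e : ℕ}
    (hn : NormalCbv t) (Φ : JV Γ t [] m e) :
    Γ = εV ∧ m = 0 ∧ e = 0 := by
  induction hn generalizing Γ m e with
  | lam _ _ =>
    -- only `many_nil` assigns `[]` to an abstraction
    cases Φ
    exact ⟨rfl, rfl, rfl⟩
  | esub _ _ _ iht ihs =>
    cases Φ with
    | esub _ ht hs =>
      obtain ⟨rfl, rfl, rfl⟩ := iht ht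
      -- the body's context is empty, so `s` is typed with `εV x = []`, i.e. tightly too
      obtain ⟨rfl, rfl, rfl⟩ := ihs hs
      exact ⟨by rw [εV_update_nil]; rfl, rfl, rfl⟩
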